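/- Let (A⊗V,μ_{A⊗V}) and (A⊗W,μ_{A⊗W}) be weak crossed products with preunits ν_V and ν_W respectively. If they are equivalent (i.e. there is a monoid isomorphism α:A×V→A×W of left A-modules for the actions φ_{A×V} and φ_{A×W}), then there exist morphisms T:A⊗V→A⊗W and S:A⊗W→A⊗V of left A-modules for the actions μ_A⊗V and μ_A⊗W such that T∘ν_V=ν_W, T∘μ_{A⊗V}=μ_{A⊗W}∘(T⊗T), S∘T=∇_{A⊗V}, and T∘S=∇_{A⊗W}. -/

import Mathlib

/-!
Transport the equivalence along the splittings: `T = i_W ∘ α ∘ p_V` and `S = i_V ∘ α⁻¹ ∘ p_W`,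
so that `S ∘ T` and `T ∘ S` telescope to the idempotents `∇`. `T` is left `A`-linear because `α`
is and because, `μ_A` being associative, so are the idempotents `∇`. For the
multiplicativity of `T` and `T ∘ ν_V = ν_W` one needs that `μ_{A⊗V}` absorbs `∇_{A⊗V}` in each
argument and in its value, and that `∇_{A⊗V} ∘ ν_V = ν_V`. The measuring condition makes
`(μ_A ⊗ V) ∘ (A ⊗ ψ)` a right `A`-action on `A ⊗ V`, which gives absorption in the first argument;
the twisted condition at `η_A` together with `∇ ∘ σ = σ` gives it in the second one;
`∇ ∘ σ = σ` alone gives it in the value, and (pre3) gives `∇ ∘ ν = ν`.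
-/

open CategoryTheory MonoidalCategory

universe v u

namespace WeakCrossed

variable {C : Type u} [Category.{v} C] [MonoidalCategory C]

/-- The monoid axioms for a triple `(A, η, μ)` in a monoidal category. -/
def IsMon (A : C) (eta : 𝟙_ C ⟶ A) (mu : A ⊗ A ⟶ A) : Prop :=
  (eta ▷ A) ≫ mu = (λ_ A).hom ∧ (A ◁ eta) ≫ mu = (ρ_ A).hom ∧
    (mu ▷ A) ≫ mu = (α_ A A A).hom ≫ (A ◁ mu) ≫ mu

/-- The morphism `(μ_A ⊗ Y) ∘ (A ⊗ f) : (A ⊗ X) ⊗ Z ⟶ A ⊗ Y` for `f : X ⊗ Z ⟶ A ⊗ Y`. -/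
def phi (A : C) {X Z Y : C} (mu : A ⊗ A ⟶ A) (f : X ⊗ Z ⟶ A ⊗ Y) :
    (A ⊗ X) ⊗ Z ⟶ A ⊗ Y :=
  (α_ A X Z).hom ≫ (A ◁ f) ≫ (α_ A A Y).inv ≫ (mu ▷ Y)

/-- The measuring condition `(μ_A ⊗ V) ∘ (A ⊗ ψ) ∘ (ψ ⊗ A) = ψ ∘ (V ⊗ μ_A)`. -/
def Measuring (A V : C) (mu : A ⊗ A ⟶ A) (psi : V ⊗ A ⟶ A ⊗ V) : Prop :=
  (psi ▷ A) ≫ phi A mu psi = (α_ V A A).hom ≫ (V ◁ mu) ≫ psi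

/-- The idempotent `∇_{A⊗V} = (μ_A ⊗ V) ∘ (A ⊗ ψ) ∘ (A ⊗ V ⊗ η_A)`. -/
def nabla (A V : C) (eta : 𝟙_ C ⟶ A) (mu : A ⊗ A ⟶ A) (psi : V ⊗ A ⟶ A ⊗ V) :
    A ⊗ V ⟶ A ⊗ V :=
  (ρ_ (A ⊗ V)).inv ≫ ((A ⊗ V) ◁ eta) ≫ phi A mu psi

/-- The twisted condition
`(μ_A ⊗ V) ∘ (A ⊗ ψ) ∘ (σ ⊗ A) = (μ_A ⊗ V) ∘ (A ⊗ σ) ∘ (ψ ⊗ V) ∘ (V ⊗ ψ)`. -/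
def Twisted (A V : C) (mu : A ⊗ A ⟶ A) (psi : V ⊗ A ⟶ A ⊗ V)
    (sig : V ⊗ V ⟶ A ⊗ V) : Prop :=
  (sig ▷ A) ≫ phi A mu psi =
    (α_ V V A).hom ≫ (V ◁ psi) ≫ (α_ V A V).inv ≫ (psi ▷ V) ≫ phi A mu sig

/-- The cocycle condition
`(μ_A ⊗ V) ∘ (A ⊗ σ) ∘ (σ ⊗ V) = (μ_A ⊗ V) ∘ (A ⊗ σ) ∘ (ψ ⊗ V) ∘ (V ⊗ σ)`. -/
def Cocycle (A V : C) (mu : A ⊗ A ⟶ A) (psi : V ⊗ A ⟶ A ⊗ V)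
    (sig : V ⊗ V ⟶ A ⊗ V) : Prop :=
  (sig ▷ V) ≫ phi A mu sig =
    (α_ V V V).hom ≫ (V ◁ sig) ≫ (α_ V A V).inv ≫ (psi ▷ V) ≫ phi A mu sig

/-- The weak crossed product multiplication
`μ_{A⊗V} = (μ_A ⊗ V) ∘ (μ_A ⊗ σ) ∘ (A ⊗ ψ ⊗ V)`. -/
def prodAV (A V : C) (mu : A ⊗ A ⟶ A) (psi : V ⊗ A ⟶ A ⊗ V)
    (sig : V ⊗ V ⟶ A ⊗ V) : (A ⊗ V) ⊗ (A ⊗ V) ⟶ A ⊗ V :=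
  (α_ A V (A ⊗ V)).hom ≫ (A ◁ ((α_ V A V).inv ≫ (psi ▷ V) ≫ (α_ A V V).hom)) ≫
    (α_ A A (V ⊗ V)).inv ≫ (mu ⊗ₘ sig) ≫ (α_ A A V).inv ≫ (mu ▷ V)

/-- The morphism `η_A ⊗ V : V ⟶ A ⊗ V`. -/
def etaT (A V : C) (eta : 𝟙_ C ⟶ A) : V ⟶ A ⊗ V := (λ_ V).inv ≫ (eta ▷ V)

/-- The morphism `β_ν = (μ_A ⊗ V) ∘ (A ⊗ ν) : A ⟶ A ⊗ V`. -/
def beta (A V : C) (mu : A ⊗ A ⟶ A) (nu : 𝟙_ C ⟶ A ⊗ V) : A ⟶ A ⊗ V :=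
  (ρ_ A).inv ≫ (A ◁ nu) ≫ (α_ A A V).inv ≫ (mu ▷ V)

/-- Preunit condition (pre1):
`(μ_A ⊗ V) ∘ (A ⊗ σ) ∘ (ψ ⊗ V) ∘ (V ⊗ ν) = ∇_{A⊗V} ∘ (η_A ⊗ V)`. -/
def Pre1 (A V : C) (eta : 𝟙_ C ⟶ A) (mu : A ⊗ A ⟶ A) (psi : V ⊗ A ⟶ A ⊗ V)
    (sig : V ⊗ V ⟶ A ⊗ V) (nu : 𝟙_ C ⟶ A ⊗ V) : Prop :=
  (ρ_ V).inv ≫ (V ◁ nu) ≫ (α_ V A V).inv ≫ (psi ▷ V) ≫ phi A mu sig =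
    etaT A V eta ≫ nabla A V eta mu psi

/-- Preunit condition (pre2):
`(μ_A ⊗ V) ∘ (A ⊗ σ) ∘ (ν ⊗ V) = ∇_{A⊗V} ∘ (η_A ⊗ V)`. -/
def Pre2 (A V : C) (eta : 𝟙_ C ⟶ A) (mu : A ⊗ A ⟶ A) (psi : V ⊗ A ⟶ A ⊗ V)
    (sig : V ⊗ V ⟶ A ⊗ V) (nu : 𝟙_ C ⟶ A ⊗ V) : Prop :=
  (λ_ V).inv ≫ (nu ▷ V) ≫ phi A mu sig = etaT A V eta ≫ nabla A V eta mu psi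

/-- Preunit condition (pre3): `(μ_A ⊗ V) ∘ (A ⊗ ψ) ∘ (ν ⊗ A) = β_ν`. -/
def Pre3 (A V : C) (mu : A ⊗ A ⟶ A) (psi : V ⊗ A ⟶ A ⊗ V)
    (nu : 𝟙_ C ⟶ A ⊗ V) : Prop :=
  (λ_ A).inv ≫ (nu ▷ A) ≫ phi A mu psi = beta A V mu nu

/-- `(A ⊗ V, μ_{A⊗V})` is a weak crossed product: measuring, twisted and cocycle
conditions hold and `∇_{A⊗V} ∘ σ = σ`. -/
def WCP (A V : C) (eta : 𝟙_ C ⟶ A) (mu : A ⊗ A ⟶ A) (psi : V ⊗ A ⟶ A ⊗ V)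
    (sig : V ⊗ V ⟶ A ⊗ V) : Prop :=
  Measuring A V mu psi ∧ Twisted A V mu psi sig ∧ Cocycle A V mu psi sig ∧
    sig ≫ nabla A V eta mu psi = sig

/-- `(A ⊗ V, μ_{A⊗V})` is a weak crossed product with preunit `ν`. -/
def WCPpre (A V : C) (eta : 𝟙_ C ⟶ A) (mu : A ⊗ A ⟶ A) (psi : V ⊗ A ⟶ A ⊗ V)
    (sig : V ⊗ V ⟶ A ⊗ V) (nu : 𝟙_ C ⟶ A ⊗ V) : Prop :=
  WCP A V eta mu psi sig ∧ Pre1 A V eta mu psi sig nu ∧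
    Pre2 A V eta mu psi sig nu ∧ Pre3 A V mu psi nu

/-- `(μ_A ⊗ Y) ∘ (A ⊗ γ) : A ⊗ X ⟶ A ⊗ Y` for `γ : X ⟶ A ⊗ Y`. -/
def tmap (A : C) {X Y : C} (mu : A ⊗ A ⟶ A) (g : X ⟶ A ⊗ Y) : A ⊗ X ⟶ A ⊗ Y :=
  (A ◁ g) ≫ (α_ A A Y).inv ≫ (mu ▷ Y)

/-- Left `A`-linearity of `T : A ⊗ X ⟶ A ⊗ Y`:
`T ∘ (μ_A ⊗ X) = (μ_A ⊗ Y) ∘ (A ⊗ T)`. -/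
def LeftLin (A : C) {X Y : C} (mu : A ⊗ A ⟶ A) (T : A ⊗ X ⟶ A ⊗ Y) : Prop :=
  (mu ▷ X) ≫ T = (α_ A A X).hom ≫ (A ◁ T) ≫ (α_ A A Y).inv ≫ (mu ▷ Y)

/-- `ν` is a preunit for the associative product `m` on `X`. -/
def IsPreunit {X : C} (m : X ⊗ X ⟶ X) (nu : 𝟙_ C ⟶ X) : Prop :=
  (ρ_ X).inv ≫ (X ◁ nu) ≫ m = (λ_ X).inv ≫ (nu ▷ X) ≫ m ∧
  (ρ_ X).inv ≫ (X ◁ nu) ≫ m =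
    (ρ_ X).inv ≫ (X ◁ ((λ_ (𝟙_ C)).inv ≫ (nu ⊗ₘ nu) ≫ m)) ≫ m

/-- Brzeziński normalization conditions: `ψ ∘ (η_V ⊗ A) = A ⊗ η_V`,
`ψ ∘ (V ⊗ η_A) = η_A ⊗ V`, `σ ∘ (η_V ⊗ V) = σ ∘ (V ⊗ η_V) = η_A ⊗ V`. -/
def BrzNorm (A V : C) (eta : 𝟙_ C ⟶ A) (etaV : 𝟙_ C ⟶ V) (psi : V ⊗ A ⟶ A ⊗ V)
    (sig : V ⊗ V ⟶ A ⊗ V) : Prop :=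
  (λ_ A).inv ≫ (etaV ▷ A) ≫ psi = (ρ_ A).inv ≫ (A ◁ etaV) ∧
  (ρ_ V).inv ≫ (V ◁ eta) ≫ psi = (λ_ V).inv ≫ (eta ▷ V) ∧
  (λ_ V).inv ≫ (etaV ▷ V) ≫ sig = (λ_ V).inv ≫ (eta ▷ V) ∧
  (ρ_ V).inv ≫ (V ◁ etaV) ≫ sig = (λ_ V).inv ≫ (eta ▷ V)


def psiUnit (A V : C) (eta : 𝟙_ C ⟶ A) (psi : V ⊗ A ⟶ A ⊗ V) : V ⟶ A ⊗ V :=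
  (ρ_ V).inv ≫ (V ◁ eta) ≫ psi

section Tmap

variable {A : C} {eta : 𝟙_ C ⟶ A} {mu : A ⊗ A ⟶ A}

lemma phi_eq_tmap {X Z Y : C} (f : X ⊗ Z ⟶ A ⊗ Y) :
    phi A mu f = (α_ A X Z).hom ≫ tmap A mu f := by
  simp [phi, tmap]

lemma whiskerLeft_comp_phi {X Z Z' Y : C} (h : Z' ⟶ Z) (f : X ⊗ Z ⟶ A ⊗ Y) :
    ((A ⊗ X) ◁ h) ≫ phi A mu f = phi A mu ((X ◁ h) ≫ f) := by
  simp [phi]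

lemma leftLin_tmap (hA : IsMon A eta mu) {X Y : C} (g : X ⟶ A ⊗ Y) :
    LeftLin A mu (tmap A mu g) := by
  calc (mu ▷ X) ≫ tmap A mu g
      = ((A ⊗ A) ◁ g) ≫ (α_ (A ⊗ A) A Y).inv ≫ (((mu ▷ A) ≫ mu) ▷ Y) := by
        simp only [tmap]; rw [← Category.assoc, ← whisker_exchange]; monoidal
    _ = ((A ⊗ A) ◁ g) ≫ (α_ (A ⊗ A) A Y).inv ≫
          (((α_ A A A).hom ≫ (A ◁ mu) ≫ mu) ▷ Y) := by rw [hA.2.2]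
    _ = _ := by simp only [tmap]; monoidal

lemma tmap_comp_tmap (hA : IsMon A eta mu) {X Y Z : C} (g : X ⟶ A ⊗ Y) (h : Y ⟶ A ⊗ Z) :
    tmap A mu g ≫ tmap A mu h = tmap A mu (g ≫ tmap A mu h) := by
  calc tmap A mu g ≫ tmap A mu h
      = (A ◁ g) ≫ (α_ A A Y).inv ≫ ((mu ▷ Y) ≫ tmap A mu h) := by simp [tmap]
    _ = tmap A mu (g ≫ tmap A mu h) := by
        rw [show _ = _ from leftLin_tmap hA h]; simp [tmap]

lemma phi_whiskerRight_phi (hA : IsMon A eta mu) {X Z W Y U : C}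
    (f : X ⊗ Z ⟶ A ⊗ Y) (g : Y ⊗ W ⟶ A ⊗ U) :
    (phi A mu f ▷ W) ≫ phi A mu g =
      (α_ (A ⊗ X) Z W).hom ≫ phi A mu ((α_ X Z W).inv ≫ (f ▷ W) ≫ phi A mu g) := by
  calc (phi A mu f ▷ W) ≫ phi A mu g
      = ((α_ A X Z).hom ▷ W) ≫ ((A ◁ f) ▷ W) ≫ ((α_ A A Y).inv ▷ W) ≫
          (α_ (A ⊗ A) Y W).hom ≫ ((mu ▷ (Y ⊗ W)) ≫ tmap A mu g) := by
        simp only [phi, tmap]; monoidal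
    _ = ((α_ A X Z).hom ▷ W) ≫ ((A ◁ f) ▷ W) ≫ ((α_ A A Y).inv ▷ W) ≫
          (α_ (A ⊗ A) Y W).hom ≫ (α_ A A (Y ⊗ W)).hom ≫ (A ◁ tmap A mu g) ≫
          (α_ A A U).inv ≫ (mu ▷ U) := by
        rw [show _ = _ from leftLin_tmap hA g]
    _ = _ := by simp only [phi, tmap]; monoidal

end Tmap

section Nabla

variable {A V : C} {eta : 𝟙_ C ⟶ A} {mu : A ⊗ A ⟶ A} {psi : V ⊗ A ⟶ A ⊗ V}
  {sig : V ⊗ V ⟶ A ⊗ V}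

lemma nabla_eq_tmap : nabla A V eta mu psi = tmap A mu (psiUnit A V eta psi) := by
  simp only [nabla, phi, tmap, psiUnit]; monoidal

lemma leftLin_nabla (hA : IsMon A eta mu) : LeftLin A mu (nabla A V eta mu psi) := by
  rw [nabla_eq_tmap]; exact leftLin_tmap hA _

lemma phi_comp_nabla (hA : IsMon A eta mu) {X Z : C} {f : X ⊗ Z ⟶ A ⊗ V}
    (hf : f ≫ nabla A V eta mu psi = f) :
    phi A mu f ≫ nabla A V eta mu psi = phi A mu f := by
  rw [phi_eq_tmap, nabla_eq_tmap, Category.assoc, tmap_comp_tmap hA, ← nabla_eq_tmap, hf]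

lemma nu_comp_nabla (hA : IsMon A eta mu) {nu : 𝟙_ C ⟶ A ⊗ V} (hp3 : Pre3 A V mu psi nu) :
    nu ≫ nabla A V eta mu psi = nu := by
  calc nu ≫ nabla A V eta mu psi
      = (ρ_ (𝟙_ C)).inv ≫ ((nu ▷ 𝟙_ C) ≫ ((A ⊗ V) ◁ eta)) ≫ phi A mu psi := by
        simp only [nabla]; monoidal
    _ = eta ≫ (λ_ A).inv ≫ (nu ▷ A) ≫ phi A mu psi := by rw [← whisker_exchange]; monoidal
    _ = eta ≫ beta A V mu nu := by rw [hp3]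
    _ = (λ_ (𝟙_ C)).inv ≫ ((eta ▷ 𝟙_ C) ≫ (A ◁ nu)) ≫ (α_ A A V).inv ≫ (mu ▷ V) := by
        simp only [beta]; monoidal
    _ = (λ_ (𝟙_ C)).inv ≫ (𝟙_ C ◁ nu) ≫ (α_ (𝟙_ C) A V).inv ≫ (((eta ▷ A) ≫ mu) ▷ V) := by
        rw [← whisker_exchange]; monoidal
    _ = nu := by rw [hA.1]; monoidal

lemma prodAV_eq :
    prodAV A V mu psi sig = (α_ (A ⊗ V) A V).inv ≫ (phi A mu psi ▷ V) ≫ phi A mu sig := by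
  simp only [prodAV, phi, MonoidalCategory.tensorHom_def]; monoidal

lemma prodAV_comp_nabla (hA : IsMon A eta mu) (hs : sig ≫ nabla A V eta mu psi = sig) :
    prodAV A V mu psi sig ≫ nabla A V eta mu psi = prodAV A V mu psi sig := by
  rw [prodAV_eq, Category.assoc, Category.assoc, phi_comp_nabla hA hs]

lemma phi_whiskerRight_phi_of_measuring (hA : IsMon A eta mu) (hm : Measuring A V mu psi) :
    (phi A mu psi ▷ A) ≫ phi A mu psi =
      (α_ (A ⊗ V) A A).hom ≫ ((A ⊗ V) ◁ mu) ≫ phi A mu psi := by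
  rw [phi_whiskerRight_phi hA, show _ = _ from hm, whiskerLeft_comp_phi, Iso.inv_hom_id_assoc]

lemma nabla_whiskerRight_phi (hA : IsMon A eta mu) (hm : Measuring A V mu psi) :
    (nabla A V eta mu psi ▷ A) ≫ phi A mu psi = phi A mu psi := by
  calc (nabla A V eta mu psi ▷ A) ≫ phi A mu psi
      = ((ρ_ (A ⊗ V)).inv ▷ A) ≫ (((A ⊗ V) ◁ eta) ▷ A) ≫
          ((phi A mu psi ▷ A) ≫ phi A mu psi) := by simp [nabla]
    _ = ((ρ_ (A ⊗ V)).inv ▷ A) ≫ (α_ (A ⊗ V) (𝟙_ C) A).hom ≫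
          ((A ⊗ V) ◁ ((eta ▷ A) ≫ mu)) ≫ phi A mu psi := by
        rw [phi_whiskerRight_phi_of_measuring hA hm]; monoidal
    _ = phi A mu psi := by rw [hA.1]; monoidal

lemma nabla_whiskerRight_prodAV (hA : IsMon A eta mu) (hm : Measuring A V mu psi) :
    (nabla A V eta mu psi ▷ (A ⊗ V)) ≫ prodAV A V mu psi sig = prodAV A V mu psi sig := by
  rw [prodAV_eq]
  calc (nabla A V eta mu psi ▷ (A ⊗ V)) ≫ (α_ (A ⊗ V) A V).inv ≫
        (phi A mu psi ▷ V) ≫ phi A mu sig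
      = (α_ (A ⊗ V) A V).inv ≫ (((nabla A V eta mu psi ▷ A) ≫ phi A mu psi) ▷ V) ≫
          phi A mu sig := by monoidal
    _ = _ := by rw [nabla_whiskerRight_phi hA hm]

end Nabla

section Twisted

variable {A V : C} {eta : 𝟙_ C ⟶ A} {mu : A ⊗ A ⟶ A} {psi : V ⊗ A ⟶ A ⊗ V}
  {sig : V ⊗ V ⟶ A ⊗ V}

lemma whiskerLeft_psiUnit_twist (htw : Twisted A V mu psi sig)
    (hs : sig ≫ nabla A V eta mu psi = sig) :
    (V ◁ psiUnit A V eta psi) ≫ (α_ V A V).inv ≫ (psi ▷ V) ≫ phi A mu sig = sig := by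
  calc (V ◁ psiUnit A V eta psi) ≫ (α_ V A V).inv ≫ (psi ▷ V) ≫ phi A mu sig
      = (ρ_ (V ⊗ V)).inv ≫ ((V ⊗ V) ◁ eta) ≫
          ((α_ V V A).hom ≫ (V ◁ psi) ≫ (α_ V A V).inv ≫ (psi ▷ V) ≫ phi A mu sig) := by
        simp only [psiUnit]; monoidal
    _ = (ρ_ (V ⊗ V)).inv ≫ (((V ⊗ V) ◁ eta) ≫ (sig ▷ A)) ≫ phi A mu psi := by
        rw [← show _ = _ from htw]; simp only [Category.assoc]
    _ = sig ≫ nabla A V eta mu psi := by rw [whisker_exchange]; simp only [nabla]; monoidal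
    _ = sig := hs

lemma whiskerLeft_psiUnit_prodAV (hA : IsMon A eta mu) (htw : Twisted A V mu psi sig)
    (hs : sig ≫ nabla A V eta mu psi = sig) :
    ((A ⊗ V) ◁ psiUnit A V eta psi) ≫ prodAV A V mu psi sig = phi A mu sig := by
  rw [prodAV_eq, phi_whiskerRight_phi hA, Iso.inv_hom_id_assoc, whiskerLeft_comp_phi,
    whiskerLeft_psiUnit_twist htw hs]

lemma whiskerLeft_nabla_prodAV (hA : IsMon A eta mu) (hm : Measuring A V mu psi)
    (htw : Twisted A V mu psi sig) (hs : sig ≫ nabla A V eta mu psi = sig) :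
    ((A ⊗ V) ◁ nabla A V eta mu psi) ≫ prodAV A V mu psi sig = prodAV A V mu psi sig := by
  calc ((A ⊗ V) ◁ nabla A V eta mu psi) ≫ prodAV A V mu psi sig
      = ((A ⊗ V) ◁ (A ◁ psiUnit A V eta psi)) ≫ ((A ⊗ V) ◁ (α_ A A V).inv) ≫
          (α_ (A ⊗ V) (A ⊗ A) V).inv ≫ ((((A ⊗ V) ◁ mu) ≫ phi A mu psi) ▷ V) ≫
          phi A mu sig := by
        rw [nabla_eq_tmap, prodAV_eq]; simp only [tmap]; monoidal
    _ = ((A ⊗ V) ◁ (A ◁ psiUnit A V eta psi)) ≫ ((A ⊗ V) ◁ (α_ A A V).inv) ≫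
          (α_ (A ⊗ V) (A ⊗ A) V).inv ≫
          (((α_ (A ⊗ V) A A).inv ≫ (phi A mu psi ▷ A) ≫ phi A mu psi) ▷ V) ≫
          phi A mu sig := by
        rw [phi_whiskerRight_phi_of_measuring hA hm, Iso.inv_hom_id_assoc]
    _ = (α_ (A ⊗ V) A V).inv ≫ (phi A mu psi ▷ V) ≫
          ((A ⊗ V) ◁ psiUnit A V eta psi) ≫ prodAV A V mu psi sig := by
        rw [prodAV_eq, ← whisker_exchange_assoc]; monoidal
    _ = prodAV A V mu psi sig := by
        rw [whiskerLeft_psiUnit_prodAV hA htw hs, prodAV_eq]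

lemma nabla_tensorHom_nabla_prodAV (hA : IsMon A eta mu) (hm : Measuring A V mu psi)
    (htw : Twisted A V mu psi sig) (hs : sig ≫ nabla A V eta mu psi = sig) :
    (nabla A V eta mu psi ⊗ₘ nabla A V eta mu psi) ≫ prodAV A V mu psi sig =
      prodAV A V mu psi sig := by
  rw [MonoidalCategory.tensorHom_def, Category.assoc, whiskerLeft_nabla_prodAV hA hm htw hs,
    nabla_whiskerRight_prodAV hA hm]

end Twisted

lemma split_mul {X Y P Q : C} {eX : X ⟶ X} {eY : Y ⟶ Y} {pX : X ⟶ P} {iX : P ⟶ X}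
    {pY : Y ⟶ Q} {iY : Q ⟶ Y} {mX : X ⊗ X ⟶ X} {mY : Y ⊗ Y ⟶ Y} (hmX : (eX ⊗ₘ eX) ≫ mX = mX)
    (hmY : mY ≫ eY = mY) (hX : pX ≫ iX = eX) (hY : pY ≫ iY = eY) (f : P ⟶ Q)
    (hf : ((iX ⊗ₘ iX) ≫ mX ≫ pX) ≫ f = (f ⊗ₘ f) ≫ (iY ⊗ₘ iY) ≫ mY ≫ pY) :
    mX ≫ pX ≫ f ≫ iY = ((pX ≫ f ≫ iY) ⊗ₘ (pX ≫ f ≫ iY)) ≫ mY := by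
  calc mX ≫ pX ≫ f ≫ iY
      = ((eX ⊗ₘ eX) ≫ mX) ≫ pX ≫ f ≫ iY := by rw [hmX]
    _ = (pX ⊗ₘ pX) ≫ (((iX ⊗ₘ iX) ≫ mX ≫ pX) ≫ f) ≫ iY := by
        rw [← hX, ← tensorHom_comp_tensorHom]; simp only [Category.assoc]
    _ = (pX ⊗ₘ pX) ≫ (f ⊗ₘ f) ≫ (iY ⊗ₘ iY) ≫ mY ≫ eY := by
        rw [hf, ← hY]; simp only [Category.assoc]
    _ = ((pX ≫ f ≫ iY) ⊗ₘ (pX ≫ f ≫ iY)) ≫ mY := by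
        rw [hmY]; simp only [tensorHom_comp_tensorHom_assoc]

lemma leftLin_split {A X Y P Q : C} {mu : A ⊗ A ⟶ A} {eX : A ⊗ X ⟶ A ⊗ X}
    {eY : A ⊗ Y ⟶ A ⊗ Y} (heX : LeftLin A mu eX) (heY : LeftLin A mu eY)
    {pX : A ⊗ X ⟶ P} {iX : P ⟶ A ⊗ X} (hX : pX ≫ iX = eX) (hX' : iX ≫ pX = 𝟙 P)
    {pY : A ⊗ Y ⟶ Q} {iY : Q ⟶ A ⊗ Y} (hY : pY ≫ iY = eY) (hY' : iY ≫ pY = 𝟙 Q)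
    (f : P ⟶ Q)
    (hf : ((A ◁ iX) ≫ (α_ A A X).inv ≫ (mu ▷ X) ≫ pX) ≫ f =
      (A ◁ f) ≫ ((A ◁ iY) ≫ (α_ A A Y).inv ≫ (mu ▷ Y) ≫ pY)) :
    LeftLin A mu (pX ≫ f ≫ iY) := by
  have heX_pX : eX ≫ pX = pX := by rw [← hX, Category.assoc, hX', Category.comp_id]
  have hiY_eY : iY ≫ eY = iY := by rw [← hY, reassoc_of% hY']
  calc (mu ▷ X) ≫ pX ≫ f ≫ iY
      = ((mu ▷ X) ≫ eX) ≫ pX ≫ f ≫ iY := by rw [Category.assoc, reassoc_of% heX_pX]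
    _ = (α_ A A X).hom ≫ (A ◁ pX) ≫
          (((A ◁ iX) ≫ (α_ A A X).inv ≫ (mu ▷ X) ≫ pX) ≫ f) ≫ iY := by
        rw [show _ = _ from heX, ← hX]; simp only [MonoidalCategory.whiskerLeft_comp,
          Category.assoc]
    _ = (α_ A A X).hom ≫ (A ◁ (pX ≫ f)) ≫ (A ◁ iY) ≫ (α_ A A Y).inv ≫ ((mu ▷ Y) ≫ eY) := by
        rw [hf, ← hY]; simp only [MonoidalCategory.whiskerLeft_comp, Category.assoc]
    _ = (α_ A A X).hom ≫ (A ◁ (pX ≫ f ≫ iY)) ≫ (α_ A A Y).inv ≫ (mu ▷ Y) := by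
        rw [show _ = _ from heY, Iso.inv_hom_id_assoc]
        simp only [← MonoidalCategory.whiskerLeft_comp_assoc, Category.assoc, hiY_eY]

/-- Theorem, (i) ⟹ (ii): an equivalence of weak crossed products
yields left `A`-linear morphisms `T`, `S` preserving preunit and product with
`S ∘ T = ∇_{A⊗V}` and `T ∘ S = ∇_{A⊗W}`. -/
theorem equiv_gives_TS (A V W : C) (eta : 𝟙_ C ⟶ A) (mu : A ⊗ A ⟶ A)
    (hA : IsMon A eta mu)
    (psiV : V ⊗ A ⟶ A ⊗ V) (sigV : V ⊗ V ⟶ A ⊗ V) (nuV : 𝟙_ C ⟶ A ⊗ V)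
    (psiW : W ⊗ A ⟶ A ⊗ W) (sigW : W ⊗ W ⟶ A ⊗ W) (nuW : 𝟙_ C ⟶ A ⊗ W)
    (hV : WCPpre A V eta mu psiV sigV nuV) (hW : WCPpre A W eta mu psiW sigW nuW)
    (PV : C) (pV : A ⊗ V ⟶ PV) (iV : PV ⟶ A ⊗ V)
    (hV1 : pV ≫ iV = nabla A V eta mu psiV) (hV2 : iV ≫ pV = 𝟙 PV)
    (PW : C) (pW : A ⊗ W ⟶ PW) (iW : PW ⟶ A ⊗ W)
    (hW1 : pW ≫ iW = nabla A W eta mu psiW) (hW2 : iW ≫ pW = 𝟙 PW)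
    (e : PV ≅ PW)
    (hunit : (nuV ≫ pV) ≫ e.hom = nuW ≫ pW)
    (hmul : ((iV ⊗ₘ iV) ≫ prodAV A V mu psiV sigV ≫ pV) ≫ e.hom =
      (e.hom ⊗ₘ e.hom) ≫ ((iW ⊗ₘ iW) ≫ prodAV A W mu psiW sigW ≫ pW))
    (hlin : ((A ◁ iV) ≫ (α_ A A V).inv ≫ (mu ▷ V) ≫ pV) ≫ e.hom =
      (A ◁ e.hom) ≫ ((A ◁ iW) ≫ (α_ A A W).inv ≫ (mu ▷ W) ≫ pW)) :
    ∃ (T : A ⊗ V ⟶ A ⊗ W) (S : A ⊗ W ⟶ A ⊗ V),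
      LeftLin A mu T ∧ LeftLin A mu S ∧ nuV ≫ T = nuW ∧
      prodAV A V mu psiV sigV ≫ T = (T ⊗ₘ T) ≫ prodAV A W mu psiW sigW ∧
      T ≫ S = nabla A V eta mu psiV ∧ S ≫ T = nabla A W eta mu psiW := by
  obtain ⟨⟨hmV, htwV, -, hsV⟩, -, -, -⟩ := hV
  obtain ⟨⟨-, -, -, hsW⟩, -, -, hp3W⟩ := hW
  have hlin_inv : ((A ◁ iW) ≫ (α_ A A W).inv ≫ (mu ▷ W) ≫ pW) ≫ e.inv =
      (A ◁ e.inv) ≫ ((A ◁ iV) ≫ (α_ A A V).inv ≫ (mu ▷ V) ≫ pV) := by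
    rw [Iso.comp_inv_eq, Category.assoc, hlin, ← MonoidalCategory.whiskerLeft_comp_assoc,
      e.inv_hom_id, MonoidalCategory.whiskerLeft_id, Category.id_comp]
  refine ⟨pV ≫ e.hom ≫ iW, pW ≫ e.inv ≫ iV,
    leftLin_split (leftLin_nabla hA) (leftLin_nabla hA) hV1 hV2 hW1 hW2 e.hom hlin,
    leftLin_split (leftLin_nabla hA) (leftLin_nabla hA) hW1 hW2 hV1 hV2 e.inv hlin_inv, ?_,
    split_mul (nabla_tensorHom_nabla_prodAV hA hmV htwV hsV) (prodAV_comp_nabla hA hsW)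
      hV1 hW1 e.hom hmul, ?_, ?_⟩
  · rw [← Category.assoc, ← Category.assoc, hunit, Category.assoc, hW1, nu_comp_nabla hA hp3W]
  · simp [reassoc_of% hW2, hV1]
  · simp [reassoc_of% hV2, hW1]

end WeakCrossed
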